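/- arXiv:2603.20722 — 2 statements merged into one kernel-verified Lean document; each statement's English description precedes it below -/
import Mathlib

section
/- Let C be a perfect code in GP(n,k), where U = {u_i : i ∈ ℤ_n} and V = {v_i : i ∈ ℤ_n}. Then 4 divides n and |C ∩ U| = |C ∩ V| = n/4. -/
/-- The generalized Petersen graph GP(n,k): vertices are `Sum.inl i` (outer, u_i)
and `Sum.inr i` (inner, v_i) for `i : ZMod n`. -/
def GP (n k : ℕ) : SimpleGraph (ZMod n ⊕ ZMod n) where
  Adj x y :=
    match x, y with
    | .inl i, .inl j => i ≠ j ∧ (j = i + 1 ∨ i = j + 1)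
    | .inl i, .inr j => i = j
    | .inr i, .inl j => i = j
    | .inr i, .inr j => i ≠ j ∧ (j = i + (k : ZMod n) ∨ i = j + (k : ZMod n))
  symm := by constructor; rintro (i|i) (j|j) h <;> simp_all <;> tauto
  loopless := by constructor; rintro (i|i) h <;> simp_all

/-- A perfect code: an independent set such that every vertex not in `C`
has exactly one neighbor in `C`. -/
def IsPerfectCode {V : Type*} (G : SimpleGraph V) (C : Set V) : Prop :=
  (∀ x ∈ C, ∀ y ∈ C, ¬ G.Adj x y) ∧ ∀ x ∉ C, ∃! y, y ∈ C ∧ G.Adj x y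

/-- A total perfect code: every vertex has exactly one neighbor in `C`. -/
def IsTotalPerfectCode {V : Type*} (G : SimpleGraph V) (C : Set V) : Prop :=
  ∀ x, ∃! y, y ∈ C ∧ G.Adj x y

/-!
Every closed neighbourhood contains exactly one codeword. Counting the pairs `(u_i, c)` with `c`
a codeword in the closed neighbourhood of `u_i` gives `n = 3 |C ∩ U| + |C ∩ V|`, since for
`n ≥ 3` an outer vertex lies in three outer closed neighbourhoods and an inner one in a single
one. The same count over the `v_i` gives `n = 3 |C ∩ V| + |C ∩ U|` as long as `2k ≠ 0`, and
the two equations force `|C ∩ U| = |C ∩ V| = n / 4`. If `2k = 0`, every `v_i` has only the two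
neighbours `u_i` and `v_{i+k}`; starting from an outer codeword `u_j`, this forces both
`u_{j+k}` and `v_{j+k+1}` into `C`, two codewords adjacent to `u_{j+k+1}`.
-/

open Finset

namespace IsPerfectCode

variable {V : Type*} {G : SimpleGraph V} {C : Set V}

theorem existsUnique_mem_closedNbhd (hC : IsPerfectCode G C) (x : V) :
    ∃! y, y ∈ C ∧ (y = x ∨ G.Adj x y) := by
  by_cases hx : x ∈ C
  · refine ⟨x, ⟨hx, Or.inl rfl⟩, ?_⟩
    rintro y ⟨hy, rfl | hxy⟩
    · rfl
    · exact absurd hxy (hC.1 x hx y hy)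
  · obtain ⟨y, ⟨hy, hxy⟩, huniq⟩ := hC.2 x hx
    refine ⟨y, ⟨hy, Or.inr hxy⟩, ?_⟩
    rintro z ⟨hz, rfl | hxz⟩
    · exact absurd hz hx
    · exact huniq z ⟨hz, hxz⟩

theorem eq_of_mem_closedNbhd (hC : IsPerfectCode G C) {x y z : V} (hy : y ∈ C) (hz : z ∈ C)
    (hxy : y = x ∨ G.Adj x y) (hxz : z = x ∨ G.Adj x z) : y = z :=
  (hC.existsUnique_mem_closedNbhd x).unique ⟨hy, hxy⟩ ⟨hz, hxz⟩

open Classical in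
/-- Double counting, using that every `f i` has exactly one codeword in its closed
neighbourhood. -/
theorem card_eq_sum_card_filter [Fintype V] (hC : IsPerfectCode G C) {ι : Type*} [Fintype ι]
    (f : ι → V) :
    Fintype.card ι = ∑ c ∈ univ.filter (· ∈ C), #{i | c = f i ∨ G.Adj (f i) c} := by
  have hrow : ∀ i, #{c ∈ univ.filter (· ∈ C) | c = f i ∨ G.Adj (f i) c} = 1 := by
    intro i
    obtain ⟨y, hy, huniq⟩ := hC.existsUnique_mem_closedNbhd (f i)
    rw [card_eq_one]
    exact ⟨y, eq_singleton_iff_unique_mem.mpr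
      ⟨by simpa using hy, fun c hc => huniq c (by simpa using hc)⟩⟩
  calc Fintype.card ι = ∑ i, #{c ∈ univ.filter (· ∈ C) | c = f i ∨ G.Adj (f i) c} := by
        simp [hrow]
    _ = _ := sum_card_bipartiteAbove_eq_sum_card_bipartiteBelow _

end IsPerfectCode

namespace GP

variable {n k : ℕ}

@[simp] theorem adj_inl_inl (i j : ZMod n) :
    (GP n k).Adj (.inl i) (.inl j) ↔ i ≠ j ∧ (j = i + 1 ∨ i = j + 1) := Iff.rfl
@[simp] theorem adj_inl_inr (i j : ZMod n) : (GP n k).Adj (.inl i) (.inr j) ↔ i = j := Iff.rfl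
@[simp] theorem adj_inr_inl (i j : ZMod n) : (GP n k).Adj (.inr i) (.inl j) ↔ i = j := Iff.rfl
@[simp] theorem adj_inr_inr (i j : ZMod n) :
    (GP n k).Adj (.inr i) (.inr j) ↔
      i ≠ j ∧ (j = i + (k : ZMod n) ∨ i = j + (k : ZMod n)) :=
  Iff.rfl

theorem card_filter_eq_or_step [NeZero n] {d : ZMod n} (hd : d ≠ 0) (h2d : d + d ≠ 0)
    (j : ZMod n) : #{i | j = i ∨ i ≠ j ∧ (j = i + d ∨ i = j + d)} = 3 := by
  have hfilter : ({i | j = i ∨ i ≠ j ∧ (j = i + d ∨ i = j + d)} : Finset (ZMod n))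
      = {j - d, j, j + d} := by
    ext i
    simp only [mem_filter, mem_univ, true_and, mem_insert, mem_singleton]
    constructor
    · rintro (rfl | ⟨-, h | rfl⟩)
      · exact Or.inr (Or.inl rfl)
      · exact Or.inl (by rw [h]; ring)
      · exact Or.inr (Or.inr rfl)
    · rintro (rfl | rfl | rfl)
      · exact Or.inr ⟨fun h => hd (by linear_combination -h), Or.inl (by ring)⟩
      · exact Or.inl rfl
      · exact Or.inr ⟨fun h => hd (by linear_combination h), Or.inr rfl⟩
  rw [hfilter, card_insert_of_notMem, card_pair]
  · exact fun h => hd (by linear_combination -h)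
  · simp only [mem_insert, mem_singleton, not_or]
    exact ⟨fun h => hd (by linear_combination -h), fun h => h2d (by linear_combination -h)⟩

variable {C : Set (ZMod n ⊕ ZMod n)}

theorem card_eq_three_mul_card_inl_add_card_inr [NeZero n] (h1 : (1 : ZMod n) ≠ 0)
    (h2 : (1 : ZMod n) + 1 ≠ 0) (hC : IsPerfectCode (GP n k) C) :
    n = 3 * Nat.card {m | Sum.inl m ∈ C} + Nat.card {m | Sum.inr m ∈ C} := by
  classical
  have := hC.card_eq_sum_card_filter Sum.inl
  rw [ZMod.card, sum_filter, Fintype.sum_sum_type] at this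
  simp only [Sum.inl.injEq, adj_inl_inl, card_filter_eq_or_step h1 h2, adj_inl_inr,
    reduceCtorEq, false_or] at this
  simpa [Nat.card_eq_card_toFinset, sum_ite, mul_comm, filter_eq'] using this

theorem card_eq_three_mul_card_inr_add_card_inl [NeZero n] (hk : (k : ZMod n) ≠ 0)
    (h2k : (k : ZMod n) + k ≠ 0) (hC : IsPerfectCode (GP n k) C) :
    n = 3 * Nat.card {m | Sum.inr m ∈ C} + Nat.card {m | Sum.inl m ∈ C} := by
  classical
  have := hC.card_eq_sum_card_filter Sum.inr
  rw [ZMod.card, sum_filter, Fintype.sum_sum_type] at this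
  simp only [Sum.inr.injEq, adj_inr_inr, card_filter_eq_or_step hk h2k, adj_inr_inl,
    reduceCtorEq, false_or] at this
  simpa [Nat.card_eq_card_toFinset, sum_ite, mul_comm, filter_eq', add_comm] using this

theorem adj_inl_add_one (h1 : (1 : ZMod n) ≠ 0) (j : ZMod n) :
    (GP n k).Adj (.inl j) (.inl (j + 1)) :=
  ⟨fun h => h1 (by linear_combination -h), Or.inl rfl⟩

theorem adj_inr_iff_of_add_self_eq_zero (hk : (k : ZMod n) ≠ 0) (h2k : (k : ZMod n) + k = 0)
    (i : ZMod n) (y : ZMod n ⊕ ZMod n) :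
    (GP n k).Adj (.inr i) y ↔ y = .inl i ∨ y = .inr (i + k) := by
  rcases y with j | j
  · simp [eq_comm]
  · simp only [adj_inr_inr, reduceCtorEq, Sum.inr.injEq, false_or]
    constructor
    · rintro ⟨-, rfl | rfl⟩
      · rfl
      · linear_combination -h2k
    · rintro rfl
      exact ⟨fun h => hk (by linear_combination -h), Or.inl rfl⟩

theorem exists_inl_mem_of_isPerfectCode (hk : (k : ZMod n) ≠ 0)
    (hC : IsPerfectCode (GP n k) C) :
    ∃ j, Sum.inl j ∈ C := by
  by_contra! hU
  have hV (i : ZMod n) : Sum.inr i ∈ C := by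
    obtain ⟨y, ⟨hy, hiy⟩, -⟩ := hC.existsUnique_mem_closedNbhd (.inl i)
    rcases y with j | j
    · exact absurd hy (hU j)
    · obtain rfl : i = j := by simpa using hiy
      exact hy
  exact hC.1 _ (hV 0) _ (hV k) ⟨fun h => hk h.symm, Or.inl (zero_add _).symm⟩

theorem not_isPerfectCode_of_add_self_eq_zero (h1 : (1 : ZMod n) ≠ 0) (hk : (k : ZMod n) ≠ 0)
    (h2k : (k : ZMod n) + k = 0) : ¬ IsPerfectCode (GP n k) C := by
  intro hC
  have adj_inr := adj_inr_iff_of_add_self_eq_zero hk h2k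
  have inr_cases (i : ZMod n) :
      Sum.inr i ∈ C ∨ Sum.inl i ∈ C ∨ Sum.inr (i + k) ∈ C := by
    obtain ⟨y, ⟨hy, hiy⟩, -⟩ := hC.existsUnique_mem_closedNbhd (.inr i)
    rcases hiy with rfl | hiy
    · exact Or.inl hy
    · rcases (adj_inr i y).mp hiy with rfl | rfl
      · exact Or.inr (Or.inl hy)
      · exact Or.inr (Or.inr hy)
  obtain ⟨j, hj⟩ := exists_inl_mem_of_isPerfectCode hk hC
  have hvj : Sum.inr j ∉ C := fun h => hC.1 _ hj _ h rfl
  have hvjk : Sum.inr (j + k) ∉ C := fun h => Sum.inl_ne_inr <|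
    hC.eq_of_mem_closedNbhd (x := .inr j) hj h (Or.inr rfl)
      (Or.inr ((adj_inr j _).mpr (Or.inr rfl)))
  have hujk : Sum.inl (j + k) ∈ C := by
    rcases inr_cases (j + k) with h | h | h
    · exact absurd h hvjk
    · exact h
    · rw [add_assoc, h2k, add_zero] at h
      exact absurd h hvj
  have huj1 : Sum.inl (j + 1) ∉ C := fun h => hC.1 _ hj _ h (adj_inl_add_one h1 j)
  have hvj1 : Sum.inr (j + 1) ∉ C := fun h => Sum.inl_ne_inr <|
    hC.eq_of_mem_closedNbhd (x := .inl (j + 1)) hj h (Or.inr (adj_inl_add_one h1 j).symm)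
      (Or.inr rfl)
  have hvj1k : Sum.inr (j + k + 1) ∈ C := by
    rcases inr_cases (j + 1) with h | h | h
    · exact absurd h hvj1
    · exact absurd h huj1
    · rwa [add_right_comm] at h
  exact Sum.inl_ne_inr <| hC.eq_of_mem_closedNbhd (x := .inl (j + k + 1)) hujk hvj1k
    (Or.inr (adj_inl_add_one h1 _).symm) (Or.inr rfl)

end GP

/-- Step 1 of the proof of Theorem 1.1: if C is a perfect code in GP(n,k),
then 4 ∣ n and |C ∩ U| = |C ∩ V| = n/4. -/
theorem stmt_3 (n k : ℕ) (hn : 3 ≤ n) (hk0 : (k : ZMod n) ≠ 0)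
    (C : Set (ZMod n ⊕ ZMod n)) (hC : IsPerfectCode (GP n k) C) :
    4 ∣ n ∧ Nat.card {m : ZMod n | Sum.inl m ∈ C} = n / 4 ∧
      Nat.card {m : ZMod n | Sum.inr m ∈ C} = n / 4 := by
  have : NeZero n := ⟨by omega⟩
  have natCast_ne_zero {m : ℕ} (hm : 0 < m) (hmn : m < n) : (m : ZMod n) ≠ 0 := by
    rw [Ne, ZMod.natCast_eq_zero_iff]
    exact fun h => absurd (Nat.le_of_dvd hm h) (by omega)
  have h1 : (1 : ZMod n) ≠ 0 := by exact_mod_cast natCast_ne_zero one_pos (by omega)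
  have h2 : (1 : ZMod n) + 1 ≠ 0 := by
    rw [one_add_one_eq_two]; exact_mod_cast natCast_ne_zero two_pos (by omega)
  have h2k : (k : ZMod n) + k ≠ 0 := fun h2k =>
    GP.not_isPerfectCode_of_add_self_eq_zero h1 hk0 h2k hC
  have outer := GP.card_eq_three_mul_card_inl_add_card_inr h1 h2 hC
  have inner := GP.card_eq_three_mul_card_inr_add_card_inl hk0 h2k hC
  omega
end

section
/- Let C be a total perfect code in GP(n,k) with C ∩ U = {u_{6i+j}, u_{6i+j+1} : i ∈ ℤ_n} for some j ∈ {0,...,5}, where n ≡ 0 (mod 6). Then C ∩ V = {v_{6i+j+3}, v_{6i+j+4} : i ∈ ℤ_n}, and k ≡ ±1 (mod 6). -/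
theorem ZMod.exists_eq_mul_add_iff {n d : ℕ} (h : d ∣ n) (m c : ZMod n) :
    (∃ i : ZMod n, m = d * i + c) ↔ ZMod.castHom h (ZMod d) m = ZMod.castHom h (ZMod d) c := by
  constructor
  · rintro ⟨i, rfl⟩
    rw [map_add, map_mul, map_natCast, ZMod.natCast_self, zero_mul, zero_add]
  · intro hm
    obtain ⟨z, hz⟩ := ZMod.intCast_surjective (m - c)
    have hzd : (z : ZMod d) = 0 := by
      rw [← map_intCast (ZMod.castHom h (ZMod d)) z, hz, map_sub, hm, sub_self]
    obtain ⟨w, rfl⟩ := (ZMod.intCast_zmod_eq_zero_iff_dvd z d).mp hzd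
    refine ⟨w, ?_⟩
    push_cast at hz
    linear_combination -hz

namespace IsTotalPerfectCode

variable {V : Type*} {G : SimpleGraph V} {C : Set V}

theorem mem_iff_forall_adj_ne_notMem (hC : IsTotalPerfectCode G C) {x c : V} (hc : G.Adj x c) :
    c ∈ C ↔ ∀ y, G.Adj x y → y ≠ c → y ∉ C := by
  constructor
  · intro hcC y hy hyc hyC
    exact hyc ((hC x).unique ⟨hyC, hy⟩ ⟨hcC, hc⟩)
  · intro h
    obtain ⟨y, ⟨hyC, hy⟩, -⟩ := hC x
    by_contra hcC
    exact h y hy (fun hyc => hcC (hyc ▸ hyC)) hyC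

end IsTotalPerfectCode

namespace GP

variable {n k : ℕ} {m : ZMod n} {y : ZMod n ⊕ ZMod n}

theorem adj_inl_iff [Nontrivial (ZMod n)] :
    (GP n k).Adj (.inl m) y ↔ y = .inl (m + 1) ∨ y = .inl (m - 1) ∨ y = .inr m := by
  rcases y with i | i
  · change m ≠ i ∧ (i = m + 1 ∨ m = i + 1) ↔ _
    simp only [Sum.inl.injEq, reduceCtorEq, or_false, eq_sub_iff_add_eq, eq_comm (b := m)]
    constructor
    · exact And.right
    · rintro (rfl | rfl) <;> simp
  · change m = i ↔ _
    simp [eq_comm]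

theorem adj_inr_iff (hk : (k : ZMod n) ≠ 0) :
    (GP n k).Adj (.inr m) y ↔ y = .inl m ∨ y = .inr (m + k) ∨ y = .inr (m - k) := by
  rcases y with i | i
  · change m = i ↔ _
    simp [eq_comm]
  · change m ≠ i ∧ (i = m + k ∨ m = i + k) ↔ _
    simp only [Sum.inr.injEq, reduceCtorEq, false_or, eq_sub_iff_add_eq, eq_comm (b := m)]
    constructor
    · exact And.right
    · rintro (rfl | rfl) <;> simpa using hk

variable {C : Set (ZMod n ⊕ ZMod n)}

theorem inr_mem_iff [Nontrivial (ZMod n)] (hC : IsTotalPerfectCode (GP n k) C) :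
    .inr m ∈ C ↔ .inl (m + 1) ∉ C ∧ .inl (m - 1) ∉ C := by
  rw [hC.mem_iff_forall_adj_ne_notMem (show (GP n k).Adj (.inl m) (.inr m) from rfl)]
  simp [adj_inl_iff, or_imp, forall_and]

theorem inl_mem_iff (hk : (k : ZMod n) ≠ 0) (hC : IsTotalPerfectCode (GP n k) C) :
    .inl m ∈ C ↔ .inr (m + k) ∉ C ∧ .inr (m - k) ∉ C := by
  rw [hC.mem_iff_forall_adj_ne_notMem (show (GP n k).Adj (.inr m) (.inl m) from rfl)]
  simp [adj_inr_iff hk, or_imp, forall_and]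

variable (ρ : ZMod n →+* ZMod 6) {t : ZMod 6}

theorem inr_mem_iff_of_inl_mem_iff (hC : IsTotalPerfectCode (GP n k) C)
    (hU : ∀ m, .inl m ∈ C ↔ ρ m = t ∨ ρ m = t + 1) (m : ZMod n) :
    .inr m ∈ C ↔ ρ m = t + 3 ∨ ρ m = t + 4 := by
  have : Fact (1 < 6) := ⟨by norm_num⟩
  have := ρ.domain_nontrivial
  have hres : ∀ t x : ZMod 6, (x = t + 3 ∨ x = t + 4) ↔
      ¬(x + 1 = t ∨ x + 1 = t + 1) ∧ ¬(x - 1 = t ∨ x - 1 = t + 1) := by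
    decide
  rw [inr_mem_iff hC, hU, hU, map_add, map_sub, map_one, hres]

theorem map_natCast_eq_one_or_five (hC : IsTotalPerfectCode (GP n k) C)
    (hk : (k : ZMod n) ≠ 0) (hU : ∀ m, .inl m ∈ C ↔ ρ m = t ∨ ρ m = t + 1) :
    ρ k = 1 ∨ ρ k = 5 := by
  have hV := inr_mem_iff_of_inl_mem_iff ρ hC hU
  obtain ⟨m₀, hm₀⟩ := ZMod.ringHom_surjective ρ t
  obtain ⟨m₂, hm₂⟩ := ZMod.ringHom_surjective ρ (t + 2)
  have h₀ := (inl_mem_iff hk hC).mp ((hU m₀).mpr (.inl hm₀))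
  have h₂ := (inl_mem_iff hk hC (m := m₂)).not
  simp only [hU, hV, map_add, map_neg, hm₀, hm₂, sub_eq_add_neg, add_assoc, add_right_inj,
    add_eq_left] at h₀ h₂
  generalize ρ k = a at h₀ h₂ ⊢
  revert a
  decide

end GP

theorem stmt_14_general (n k : ℕ) (hk0 : (k : ZMod n) ≠ 0) (h6 : n % 6 = 0)
    (C : Set (ZMod n ⊕ ZMod n)) (hC : IsTotalPerfectCode (GP n k) C)
    (j : ℕ)
    (hU : ∀ m : ZMod n, Sum.inl m ∈ C ↔
      ∃ i : ZMod n, m = 6 * i + (j : ZMod n) ∨ m = 6 * i + (j : ZMod n) + 1) :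
    (∀ m : ZMod n, Sum.inr m ∈ C ↔
      ∃ i : ZMod n, m = 6 * i + (j : ZMod n) + 3 ∨ m = 6 * i + (j : ZMod n) + 4) ∧
    (k % 6 = 1 ∨ k % 6 = 5) := by
  have hdvd : 6 ∣ n := Nat.dvd_of_mod_eq_zero h6
  set ρ := ZMod.castHom hdvd (ZMod 6)
  have hres : ∀ m c : ZMod n, (∃ i : ZMod n, m = 6 * i + c) ↔ ρ m = ρ c := by
    simpa only [Nat.cast_ofNat] using ZMod.exists_eq_mul_add_iff hdvd
  have hU' : ∀ m, .inl m ∈ C ↔ ρ m = j ∨ ρ m = j + 1 := by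
    simp only [hU, exists_or, add_assoc, hres, map_add, map_natCast, map_one, implies_true]
  refine ⟨fun m => ?_, ?_⟩
  · rw [GP.inr_mem_iff_of_inl_mem_iff ρ hC hU']
    simp only [exists_or, add_assoc, hres, map_add, map_natCast, map_ofNat]
  · rw [← ZMod.val_natCast 6 k, ← map_natCast ρ k]
    rcases GP.map_natCast_eq_one_or_five ρ hC hk0 hU' with h | h <;> rw [h] <;> decide

/-- Case 2 of the proof of Theorem 1.2: if C is a total perfect code in GP(n,k)
(n ≡ 0 (mod 6)) with C ∩ U = {u_{6i+j}, u_{6i+j+1} : i ∈ ℤ_n} for some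
j ∈ {0,...,5}, then C ∩ V = {v_{6i+j+3}, v_{6i+j+4} : i ∈ ℤ_n} and
k ≡ ±1 (mod 6). -/
theorem stmt_14 (n k : ℕ) (hn : 3 ≤ n) (hk0 : (k : ZMod n) ≠ 0) (h6 : n % 6 = 0)
    (C : Set (ZMod n ⊕ ZMod n)) (hC : IsTotalPerfectCode (GP n k) C)
    (j : ℕ) (hj : j < 6)
    (hU : ∀ m : ZMod n, Sum.inl m ∈ C ↔
      ∃ i : ZMod n, m = 6 * i + (j : ZMod n) ∨ m = 6 * i + (j : ZMod n) + 1) :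
    (∀ m : ZMod n, Sum.inr m ∈ C ↔
      ∃ i : ZMod n, m = 6 * i + (j : ZMod n) + 3 ∨ m = 6 * i + (j : ZMod n) + 4) ∧
    (k % 6 = 1 ∨ k % 6 = 5) :=
  stmt_14_general n k hk0 h6 C hC j hU
end
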